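/- Let L be a Dedekind complete unital f-algebra and X a partially ordered L-module. Then X is sequentially Archimedean if and only if X is both sequentially ℝ-Archimedean and sequentially P-Archimedean. -/

import Mathlib

/-!
Given `λ n ↓ 0` and `ε > 0`, let `π n` be the component of `1` in the band generated by
`(λ n - ε)⁺`. The `π n` are idempotents decreasing to `0`, because `ε π n ≤ λ n`, and
`λ n ≤ ε + π n λ 0`. So a lower bound `b` of the `λ n • x` satisfies `b ≤ ε • x + π n • (λ 0 • x)`
for all `n`; P-Archimedeanity gives `b ≤ ε • x`, and ℝ-Archimedeanity along `ε = 1 / (n + 1)`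
gives `b ≤ 0`.
-/

/-- A Dedekind complete unital `f`-algebra over the reals. -/
class DFAlgebra (L : Type*) extends CommRing L, Lattice L, Algebra ℝ L where
  add_le_add_left : ∀ a b : L, a ≤ b → ∀ c : L, c + a ≤ c + b
  mul_nonneg : ∀ a b : L, 0 ≤ a → 0 ≤ b → 0 ≤ a * b
  f_prop : ∀ a b c : L, a ⊓ b = 0 → 0 ≤ c → (c * a) ⊓ b = 0
  algebraMap_nonneg : ∀ r : ℝ, 0 ≤ r → 0 ≤ Algebra.algebraMap ℝ L r
  dedekind : ∀ S : Set L, S.Nonempty → BddAbove S → ∃ a : L, IsLUB S a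

/-- A partially ordered `L`-module. -/
class POModule (L : Type*) [DFAlgebra L] (X : Type*) extends
    AddCommGroup X, Module L X, PartialOrder X where
  add_le_add_left : ∀ a b : X, a ≤ b → ∀ c : X, c + a ≤ c + b
  smul_le_smul : ∀ l : L, 0 ≤ l → ∀ a b : X, a ≤ b → l • a ≤ l • b
/-- X is sequentially S-Archimedean: for every sequence in S decreasing to 0 in L
and every x ≥ 0 in X, the sequence (λ n • x) has infimum 0 in X. -/
def SeqSArchimedean (L X : Type*) [DFAlgebra L] [POModule L X] (S : Set L) : Prop :=
  ∀ l : ℕ → L, (∀ n, l n ∈ S) → Antitone l → IsGLB (Set.range l) 0 →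
    ∀ x : X, 0 ≤ x → IsGLB (Set.range fun n => l n • x) 0

open Set

theorem inf_eq_zero_of_le_of_le {α : Type*} [Lattice α] [Zero α] {a a' b b' : α} (h : a ⊓ b = 0)
    (ha' : 0 ≤ a') (haa : a' ≤ a) (hb' : 0 ≤ b') (hbb : b' ≤ b) : a' ⊓ b' = 0 :=
  le_antisymm (h ▸ inf_le_inf haa hbb) (le_inf ha' hb')

section LatticeOrderedGroup

variable {α : Type*} [AddCommGroup α] [Lattice α] [IsOrderedAddMonoid α] {a b c : α}

theorem add_eq_sup_of_inf_eq_zero (h : a ⊓ b = 0) : a + b = a ⊔ b := by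
  rw [← inf_add_sup a b, h, zero_add]

theorem inf_add_le_inf_add_inf (hab : 0 ≤ a ⊓ b) (hc : 0 ≤ c) :
    a ⊓ (b + c) ≤ a ⊓ b + a ⊓ c := by
  have h : a ⊓ (b + c) ≤ a ⊓ b + c := by
    rw [inf_add]
    exact le_inf (inf_le_left.trans (le_add_of_nonneg_right hc)) inf_le_right
  calc a ⊓ (b + c) ≤ a ⊓ (a ⊓ b + c) := le_inf inf_le_left h
    _ ≤ a ⊓ b + a ⊓ c := by
      rw [add_inf]
      exact le_inf (inf_le_left.trans (le_add_of_nonneg_left hab)) inf_le_right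

theorem inf_nsmul_eq_zero (h : a ⊓ b = 0) (n : ℕ) : a ⊓ n • b = 0 := by
  have hb : 0 ≤ b := h ▸ inf_le_right
  induction n with
  | zero => rw [zero_nsmul, inf_eq_right]; exact h ▸ inf_le_left
  | succ n ih =>
    refine le_antisymm ?_ (ih ▸ inf_le_inf_left a (nsmul_le_nsmul_left hb n.le_succ))
    calc a ⊓ (n + 1) • b = a ⊓ (n • b + b) := by rw [succ_nsmul]
      _ ≤ a ⊓ n • b + a ⊓ b := inf_add_le_inf_add_inf ih.ge hb
      _ = 0 := by rw [ih, h, add_zero]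

end LatticeOrderedGroup

section DedekindFAlgebra

variable {L : Type*} [DFAlgebra L]

instance : IsOrderedAddMonoid L where
  add_le_add_left a b h c := by simpa only [add_comm _ c] using DFAlgebra.add_le_add_left a b h c

instance : ZeroLEOneClass L where
  zero_le_one := by simpa using DFAlgebra.algebraMap_nonneg (L := L) 1 zero_le_one

instance : IsOrderedRing L := .of_mul_nonneg DFAlgebra.mul_nonneg

instance : IsOrderedModule ℝ L := .of_algebraMap_mono fun r s h => by
  simpa [sub_nonneg] using DFAlgebra.algebraMap_nonneg (L := L) (s - r) (sub_nonneg.2 h)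

noncomputable instance : SupSet L where
  sSup s := by
    classical
    exact if h : s.Nonempty ∧ BddAbove s then (DFAlgebra.dedekind s h.1 h.2).choose else 0

noncomputable instance : ConditionallyCompleteLattice L :=
  conditionallyCompleteLatticeOfLatticeOfsSup L fun s hs hne => by
    simp only [sSup, dif_pos (And.intro hne hs)]
    exact (DFAlgebra.dedekind s hne hs).choose_spec

theorem nonpos_of_forall_nsmul_le {t u : L} (h : ∀ n : ℕ, n • t ≤ u) : t ≤ 0 := by
  have hbdd : BddAbove (range fun n : ℕ => n • t) := ⟨u, forall_mem_range.2 h⟩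
  have : ⨆ n : ℕ, n • t ≤ (⨆ n : ℕ, n • t) - t := ciSup_le fun n =>
    le_sub_iff_add_le.2 (by simpa only [succ_nsmul] using le_ciSup hbdd (n + 1))
  exact (le_sub_self_iff _).1 this

theorem eq_zero_of_forall_inf_nsmul_sub_one_nonpos {t : L} (ht : 0 ≤ t)
    (h : ∀ k : ℕ, t ⊓ (k • t - 1) ≤ 0) : t = 0 := by
  have hbdd : ∀ k : ℕ, k • t ≤ t + 1 := by
    intro k
    induction k with
    | zero => simpa using add_nonneg ht zero_le_one
    | succ k ih =>
      calc (k + 1) • t = t ⊓ (k • t - 1) + t ⊔ (k • t - 1) + 1 := by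
            rw [inf_add_sup, succ_nsmul]; abel
        _ ≤ 0 + t + 1 := by gcongr; exacts [h k, sup_le le_rfl (sub_le_iff_le_add.2 ih)]
        _ = t + 1 := by rw [zero_add]
  exact le_antisymm (nonpos_of_forall_nsmul_le hbdd) ht

theorem mul_eq_zero_of_inf_eq_zero {a b : L} (h : a ⊓ b = 0) : a * b = 0 := by
  have ha : 0 ≤ a := h ▸ inf_le_left
  have hb : 0 ≤ b := h ▸ inf_le_right
  have hab : (a * b) ⊓ a = 0 := DFAlgebra.f_prop b a a (by rwa [inf_comm]) ha
  have := DFAlgebra.f_prop a (a * b) b (by rwa [inf_comm] at hab) hb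
  rwa [mul_comm b a, inf_idem] at this

/-- The component of `1` in the band generated by `b` (the band projection `P_b 1`). -/
noncomputable def unitComponent (b : L) : L := ⨆ k : ℕ, 1 ⊓ k • b

theorem one_inf_nsmul_le_unitComponent (b : L) (k : ℕ) : 1 ⊓ k • b ≤ unitComponent b :=
  le_ciSup (f := fun k : ℕ => 1 ⊓ k • b) ⟨1, forall_mem_range.2 fun _ => inf_le_left⟩ k

theorem unitComponent_nonneg (b : L) : 0 ≤ unitComponent b := by
  simpa using one_inf_nsmul_le_unitComponent b 0

theorem unitComponent_le_one (b : L) : unitComponent b ≤ 1 :=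
  ciSup_le fun _ => inf_le_left

theorem unitComponent_mono : Monotone (unitComponent (L := L)) := fun _ b' h =>
  ciSup_le fun k =>
    (inf_le_inf_left 1 (nsmul_le_nsmul_right h k)).trans (one_inf_nsmul_le_unitComponent b' k)

theorem inf_unitComponent_eq_zero {b c : L} (hb : 0 ≤ b) (h : c ⊓ b = 0) :
    c ⊓ unitComponent b = 0 := by
  set d := c ⊓ unitComponent b
  have hc : 0 ≤ c := h ▸ inf_le_left
  have hd : 0 ≤ d := le_inf hc (unitComponent_nonneg b)
  have : unitComponent b ≤ unitComponent b - d := ciSup_le fun k => by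
    have hk : 0 ≤ 1 ⊓ k • b := le_inf zero_le_one (nsmul_nonneg hb k)
    have hkd : (1 ⊓ k • b) ⊓ d = 0 := by
      rw [inf_comm]
      exact inf_eq_zero_of_le_of_le (inf_nsmul_eq_zero h k) hd inf_le_left hk inf_le_right
    rw [le_sub_iff_add_le, add_eq_sup_of_inf_eq_zero hkd]
    exact sup_le (one_inf_nsmul_le_unitComponent b k) inf_le_right
  exact le_antisymm ((le_sub_self_iff _).1 this) hd

theorem inf_one_sub_unitComponent_eq_zero {b : L} (hb : 0 ≤ b) :
    b ⊓ (1 - unitComponent b) = 0 := by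
  refine eq_zero_of_forall_inf_nsmul_sub_one_nonpos
    (le_inf hb (sub_nonneg.2 (unitComponent_le_one b))) fun k => ?_
  have hneg : 1 - unitComponent b ≤ (k • b - 1)⁻ := by
    calc 1 - unitComponent b ≤ 1 - 1 ⊓ k • b :=
          sub_le_sub_left (one_inf_nsmul_le_unitComponent b k) 1
      _ = (k • b - 1)⁻ := by rw [sub_inf, sub_self, negPart_def, neg_sub, sup_comm]
  have hpos : k • (b ⊓ (1 - unitComponent b)) - 1 ≤ (k • b - 1)⁺ :=
    (sub_le_sub_right (nsmul_le_nsmul_right inf_le_left k) 1).trans (le_posPart _)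
  calc b ⊓ (1 - unitComponent b) ⊓ (k • (b ⊓ (1 - unitComponent b)) - 1)
      ≤ (k • b - 1)⁻ ⊓ (k • b - 1)⁺ := inf_le_inf (inf_le_right.trans hneg) hpos
    _ = 0 := by rw [inf_comm, posPart_inf_negPart_eq_zero]

theorem mul_unitComponent {b : L} (hb : 0 ≤ b) : b * unitComponent b = b := by
  have := mul_eq_zero_of_inf_eq_zero (inf_one_sub_unitComponent_eq_zero hb)
  rwa [mul_sub, mul_one, sub_eq_zero, eq_comm] at this

theorem unitComponent_mul_self {b : L} (hb : 0 ≤ b) :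
    unitComponent b * unitComponent b = unitComponent b := by
  have h : (1 - unitComponent b) ⊓ b = 0 := by
    rw [inf_comm]; exact inf_one_sub_unitComponent_eq_zero hb
  have := mul_eq_zero_of_inf_eq_zero (inf_unitComponent_eq_zero hb h)
  rwa [sub_mul, one_mul, sub_eq_zero, eq_comm] at this

theorem inf_algebraMap_mul_eq_zero {c p : L} (h : c ⊓ p = 0) (hp : 0 ≤ p) {ε : ℝ} (hε : 0 ≤ ε) :
    c ⊓ (algebraMap ℝ L ε * p) = 0 := by
  have hle : algebraMap ℝ L ε * p ≤ ⌈ε⌉₊ • p := by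
    rw [nsmul_eq_mul, ← map_natCast (algebraMap ℝ L)]
    exact mul_le_mul_of_nonneg_right (algebraMap_mono L (Nat.le_ceil ε)) hp
  exact inf_eq_zero_of_le_of_le (inf_nsmul_eq_zero h _) (h ▸ inf_le_left) le_rfl
    (mul_nonneg (algebraMap_nonneg L hε) hp) hle

theorem le_add_unitComponent_mul {a c e : L} (he : 0 ≤ e) (hac : a ≤ c) (hc : 0 ≤ c) :
    a ≤ e + unitComponent (a - e)⁺ * c := by
  have hpos : (a - e)⁺ ≤ c := sup_le ((sub_le_self a he).trans hac) hc
  calc a = e + (a - e) := by abel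
    _ ≤ e + (a - e)⁺ := by gcongr; exact le_posPart _
    _ = e + (a - e)⁺ * unitComponent (a - e)⁺ := by rw [mul_unitComponent (posPart_nonneg _)]
    _ ≤ e + c * unitComponent (a - e)⁺ := by gcongr; exact unitComponent_nonneg _
    _ = e + unitComponent (a - e)⁺ * c := by rw [mul_comm]

theorem algebraMap_mul_unitComponent_le {a : L} (ha : 0 ≤ a) {ε : ℝ} (hε : 0 ≤ ε) :
    algebraMap ℝ L ε * unitComponent (a - algebraMap ℝ L ε)⁺ ≤ a := by
  set e := algebraMap ℝ L ε
  set p := unitComponent (a - e)⁺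
  have he : 0 ≤ e := algebraMap_nonneg L hε
  have hdisj : (a - e)⁻ ⊓ (e * p) = 0 :=
    inf_algebraMap_mul_eq_zero (inf_unitComponent_eq_zero (posPart_nonneg _)
      (by rw [inf_comm, posPart_inf_negPart_eq_zero])) (unitComponent_nonneg _) hε
  have hneg : (a - e)⁻ ≤ e := by
    rw [negPart_def, neg_sub]; exact sup_le (sub_le_self e ha) he
  have hep : e * p ≤ e := mul_le_of_le_one_right he (unitComponent_le_one _)
  have hsum : (a - e)⁻ + e * p ≤ e := by
    rw [add_eq_sup_of_inf_eq_zero hdisj]; exact sup_le hneg hep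
  calc e * p ≤ e - (a - e)⁻ := le_sub_iff_add_le'.2 hsum
    _ ≤ e + (a - e) := by
      rw [sub_eq_add_neg]; gcongr; exact neg_le.1 (by simpa using neg_le_negPart (a - e))
    _ = a := by abel

theorem isGLB_range_algebraMap_inv_succ :
    IsGLB (range fun n : ℕ => algebraMap ℝ L ((n : ℝ) + 1)⁻¹) 0 := by
  refine ⟨forall_mem_range.2 fun n => algebraMap_nonneg L (by positivity), fun c hc => ?_⟩
  refine le_posPart c |>.trans (nonpos_of_forall_nsmul_le (u := 1) fun n => ?_)
  have hcn : c⁺ ≤ algebraMap ℝ L ((n : ℝ) + 1)⁻¹ :=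
    sup_le (hc ⟨n, rfl⟩) (algebraMap_nonneg L (by positivity))
  calc n • c⁺ ≤ n • algebraMap ℝ L ((n : ℝ) + 1)⁻¹ := nsmul_le_nsmul_right hcn n
    _ = algebraMap ℝ L (n * ((n : ℝ) + 1)⁻¹) := by rw [map_mul, map_natCast, nsmul_eq_mul]
    _ ≤ algebraMap ℝ L 1 := algebraMap_mono L <| by
      rw [← div_eq_mul_inv, div_le_one (by positivity)]; linarith
    _ = 1 := map_one _

section Sequence

variable {l : ℕ → L} {ε : ℝ}

theorem antitone_unitComponent_posPart_sub (hl : Antitone l) (e : L) :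
    Antitone fun n => unitComponent (l n - e)⁺ := fun _ _ h =>
  unitComponent_mono (posPart_mono (sub_le_sub_right (hl h) e))

theorem isGLB_range_unitComponent_posPart_sub (hl : IsGLB (range l) 0) (hε : 0 < ε) :
    IsGLB (range fun n => unitComponent (l n - algebraMap ℝ L ε)⁺) 0 := by
  refine ⟨forall_mem_range.2 fun n => unitComponent_nonneg _, fun c hc => ?_⟩
  have hec : algebraMap ℝ L ε * c ≤ 0 := hl.2 <| forall_mem_range.2 fun n =>
    (mul_le_mul_of_nonneg_left (hc ⟨n, rfl⟩) (algebraMap_nonneg L hε.le)).trans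
      (algebraMap_mul_unitComponent_le (hl.1 ⟨n, rfl⟩) hε.le)
  calc c = algebraMap ℝ L ε⁻¹ * (algebraMap ℝ L ε * c) := by
        rw [← mul_assoc, ← map_mul, inv_mul_cancel₀ hε.ne', map_one, one_mul]
    _ ≤ 0 := mul_nonpos_of_nonneg_of_nonpos (algebraMap_nonneg L (inv_nonneg.2 hε.le)) hec

end Sequence

end DedekindFAlgebra

/-- Not an instance, since `L` cannot be inferred from `X`. -/
theorem POModule.isOrderedAddMonoid (L X : Type*) [DFAlgebra L] [POModule L X] :
    IsOrderedAddMonoid X where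
  add_le_add_left a b h c := by
    simpa only [add_comm _ c] using POModule.add_le_add_left (L := L) a b h c

section POModule

variable {L X : Type*} [DFAlgebra L] [POModule L X]

instance : PosSMulMono L X where
  smul_le_smul_of_nonneg_left a ha _ _ h := POModule.smul_le_smul a ha _ _ h

instance : SMulPosMono L X where
  smul_le_smul_of_nonneg_right x hx a b h := by
    have := POModule.add_le_add_left (L := L) 0 ((b - a) • x) (smul_nonneg (sub_nonneg.2 h) hx)
      (a • x)
    rwa [add_zero, ← add_smul, add_sub_cancel] at this

theorem SeqSArchimedean.mono {S T : Set L} (hST : S ⊆ T) (h : SeqSArchimedean L X T) :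
    SeqSArchimedean L X S := fun l hl => h l fun n => hST (hl n)

theorem SeqSArchimedean.nonpos_of_forall_le_algebraMap_smul
    (hR : SeqSArchimedean L X {l | ∃ r : ℝ, l = algebraMap ℝ L r}) {x b : X} (hx : 0 ≤ x)
    (hb : ∀ ε : ℝ, 0 < ε → b ≤ algebraMap ℝ L ε • x) : b ≤ 0 := by
  have hanti : Antitone fun n : ℕ => algebraMap ℝ L ((n : ℝ) + 1)⁻¹ := fun _ _ h =>
    algebraMap_mono L (by gcongr)
  exact (hR _ (fun n => ⟨_, rfl⟩) hanti isGLB_range_algebraMap_inv_succ x hx).2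
    (forall_mem_range.2 fun n => hb _ (by positivity))

theorem SeqSArchimedean.le_algebraMap_smul_of_forall_le
    (hP : SeqSArchimedean L X {π | π * π = π}) {l : ℕ → L} (hl : Antitone l)
    (hl0 : IsGLB (range l) 0) {x b : X} (hx : 0 ≤ x) (hb : ∀ n, b ≤ l n • x) {ε : ℝ}
    (hε : 0 < ε) : b ≤ algebraMap ℝ L ε • x := by
  have := POModule.isOrderedAddMonoid L X
  set e := algebraMap ℝ L ε
  have hp := hP _ (fun n => unitComponent_mul_self (posPart_nonneg (l n - e)))
    (antitone_unitComponent_posPart_sub hl e) (isGLB_range_unitComponent_posPart_sub hl0 hε)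
    (l 0 • x) (smul_nonneg (hl0.1 ⟨0, rfl⟩) hx)
  refine sub_nonpos.1 (hp.2 (forall_mem_range.2 fun n => sub_le_iff_le_add'.2 ?_))
  calc b ≤ l n • x := hb n
    _ ≤ (e + unitComponent (l n - e)⁺ * l 0) • x := smul_le_smul_of_nonneg_right
        (le_add_unitComponent_mul (algebraMap_nonneg L hε.le) (hl (Nat.zero_le n))
          (hl0.1 ⟨0, rfl⟩)) hx
    _ = e • x + unitComponent (l n - e)⁺ • l 0 • x := by rw [add_smul, mul_smul]

end POModule

/-- X is sequentially Archimedean iff X is sequentially ℝ-Archimedean and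
sequentially P-Archimedean. -/
theorem stmt6 (L X : Type*) [DFAlgebra L] [POModule L X] :
    SeqSArchimedean L X Set.univ ↔
      SeqSArchimedean L X {l : L | ∃ r : ℝ, l = algebraMap ℝ L r} ∧
        SeqSArchimedean L X {π : L | π * π = π} := by
  refine ⟨fun h => ⟨h.mono (subset_univ _), h.mono (subset_univ _)⟩, ?_⟩
  rintro ⟨hR, hP⟩ l - hl hl0 x hx
  refine ⟨forall_mem_range.2 fun n => smul_nonneg (hl0.1 ⟨n, rfl⟩) hx, fun b hb => ?_⟩
  exact hR.nonpos_of_forall_le_algebraMap_smul hx fun ε hε =>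
    hP.le_algebraMap_smul_of_forall_le hl hl0 hx (fun n => hb ⟨n, rfl⟩) hε
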